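/- arXiv:2110.00421 — 2 statements merged into one kernel-verified Lean document; each statement's English description precedes it below -/
import Mathlib

section
/- Let C be the 6×6 orthotropic stiffness matrix (block diagonal with a symmetric 3×3 block B₁ and diagonal entries C₄₄ = C_{1212}, C₅₅ = C_{1313}, C₆₆ = C_{2323}). If T_θ C T_θ⁻¹ = C for some θ with sin(2θ) ≠ 0, then C_{2323} = (C_{2222} - C_{2233} - C_{3322} + C_{3333})/2. -/
open Matrix Real

@[simp] lemma vec6_0 {α} (a b c d e f : α) : ![a,b,c,d,e,f] 0 = a := rfl
@[simp] lemma vec6_1 {α} (a b c d e f : α) : ![a,b,c,d,e,f] 1 = b := rfl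
@[simp] lemma vec6_2 {α} (a b c d e f : α) : ![a,b,c,d,e,f] 2 = c := rfl
@[simp] lemma vec6_3 {α} (a b c d e f : α) : ![a,b,c,d,e,f] 3 = d := rfl
@[simp] lemma vec6_4 {α} (a b c d e f : α) : ![a,b,c,d,e,f] 4 = e := rfl
@[simp] lemma vec6_5 {α} (a b c d e f : α) : ![a,b,c,d,e,f] 5 = f := rfl


@[simp] lemma consA {α} (a : α) (f : Fin 5 → α) : Matrix.vecCons a f (5:Fin 6) = f 4 := rfl
@[simp] lemma consB {α} (a : α) (f : Fin 4 → α) : Matrix.vecCons a f (4:Fin 5) = f 3 := rfl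
@[simp] lemma consC {α} (a : α) (f : Fin 3 → α) : Matrix.vecCons a f (3:Fin 4) = f 2 := rfl
@[simp] lemma consD {α} (a : α) (f : Fin 2 → α) : Matrix.vecCons a f (2:Fin 3) = f 1 := rfl
@[simp] lemma consE {α} (a : α) (f : Fin 1 → α) : Matrix.vecCons a f (1:Fin 2) = f 0 := rfl
@[simp] lemma consF {α} (a : α) (f : Fin 0 → α) : Matrix.vecCons a f 0 = a := rfl

noncomputable def Tmat (θ : ℝ) : Matrix (Fin 6) (Fin 6) ℝ :=
  !![1, 0, 0, 0, 0, 0;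
     0, cos θ ^ 2, sin θ ^ 2, 0, 0, -sin (2*θ);
     0, sin θ ^ 2, cos θ ^ 2, 0, 0, sin (2*θ);
     0, 0, 0, cos θ, -sin θ, 0;
     0, 0, 0, sin θ, cos θ, 0;
     0, sin θ * cos θ, -(sin θ * cos θ), 0, 0, cos (2*θ)]

theorem invariance_forces_C2323
    (c1111 c1122 c1133 c2211 c2222 c2233 c3311 c3322 c3333 c1212 c1313 c2323 : ℝ)
    (C : Matrix (Fin 6) (Fin 6) ℝ)
    (hC : C = !![c1111, c1122, c1133, 0, 0, 0;
                 c2211, c2222, c2233, 0, 0, 0;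
                 c3311, c3322, c3333, 0, 0, 0;
                 0, 0, 0, c1212, 0, 0;
                 0, 0, 0, 0, c1313, 0;
                 0, 0, 0, 0, 0, c2323])
    (θ : ℝ) (hθ : sin (2*θ) ≠ 0)
    (hinv : Tmat θ * C * Tmat (-θ) = C) :
    c2323 = (c2222 - c2233 - c3322 + c3333) / 2 := by
  subst hC
  have h51 := congrFun (congrFun hinv 5) 1
  have h52 := congrFun (congrFun hinv 5) 2
  have h15 := congrFun (congrFun hinv 1) 5
  have h25 := congrFun (congrFun hinv 2) 5
  have h55 := congrFun (congrFun hinv 5) 5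
  simp [Tmat, Matrix.mul_apply, Fin.sum_univ_six, sin_two_mul, cos_two_mul,
    Real.sin_neg, Real.cos_neg] at h51 h52 h15 h25 h55
  rw [sin_two_mul] at hθ
  set s := sin θ with hs
  set co := cos θ with hco
  have hp : s * co ≠ 0 := fun h => hθ (by rw [mul_assoc, h, mul_zero])
  have pyth : s ^ 2 + co ^ 2 = 1 := sin_sq_add_cos_sq θ
  have key1 : s * co * (c2222 + c2233 - c3322 - c3333) = 0 := by
    linear_combination h51 + h52 - s*co*(c2222 + c2233 - c3322 - c3333)*pyth
  have key2 : 2 * (s * co) * (c2222 - c2233 + c3322 - c3333) = 0 := by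
    linear_combination h15 + h25 - 2*s*co*(c2222 - c2233 + c3322 - c3333)*pyth
  have e1 : c2222 + c2233 - c3322 - c3333 = 0 := by
    rcases mul_eq_zero.mp key1 with h | h
    · exact absurd h hp
    · exact h
  have e2 : c2222 - c2233 + c3322 - c3333 = 0 := by
    rcases mul_eq_zero.mp key2 with h | h
    · rcases mul_eq_zero.mp h with h' | h'
      · norm_num at h'
      · exact absurd h' hp
    · exact h
  have hy : c3322 = c2233 := by linarith
  have hw : c3333 = c2222 := by linarith
  rw [hy, hw] at h55
  have key3 : (s * co) ^ 2 * (4 * (c2222 - c2233 - c2323)) = 0 := by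
    linear_combination h55 - 4*co^2*c2323*pyth
  have h4 : c2222 - c2233 - c2323 = 0 := by
    rcases mul_eq_zero.mp key3 with h | h
    · exact absurd (pow_eq_zero_iff (by norm_num) |>.mp h) hp
    · linarith
  rw [hy, hw]
  linarith
end

section
/- Under the identity T_θ C T_θ⁻¹ applied to an orthotropic stiffness matrix C, the (6,6)-entry equals ((C_{2222} - C_{2233} - C_{3322} + C_{3333})/2)·sin²(2θ) + C_{2323}·cos²(2θ), for every θ ∈ ℝ. -/
open Matrix Real

lemma cons_val_five' {α : Type*} {m : ℕ} (x : α) (u : Fin (m+5) → α) :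
    Matrix.vecCons x u 5 = u 4 := rfl

theorem conjugated_entry_66
    (c1111 c1122 c1133 c2211 c2222 c2233 c3311 c3322 c3333 c1212 c1313 c2323 : ℝ)
    (C : Matrix (Fin 6) (Fin 6) ℝ)
    (hC : C = !![c1111, c1122, c1133, 0, 0, 0;
                 c2211, c2222, c2233, 0, 0, 0;
                 c3311, c3322, c3333, 0, 0, 0;
                 0, 0, 0, c1212, 0, 0;
                 0, 0, 0, 0, c1313, 0;
                 0, 0, 0, 0, 0, c2323])
    (θ : ℝ) :
    (Tmat θ * C * Tmat (-θ)) 5 5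
      = ((c2222 - c2233 - c3322 + c3333) / 2) * sin (2*θ) ^ 2
        + c2323 * cos (2*θ) ^ 2 := by
  subst hC
  simp [Tmat, Matrix.mul_apply, Fin.sum_univ_six, sin_two_mul, sin_neg, cos_neg,
    Matrix.cons_val_succ, cons_val_five']
  ring
end
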